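/- On a nearly cosymplectic manifold, for all tangent vectors X and Y, (∇_{θX} θ)(θY) = -(∇_X θ)(Y) + g(Y,ξ) ∇_{θX} ξ + g(X,ξ) θ(∇_Y ξ). -/

import Mathlib

/-- Abstract algebraic model of a nearly cosymplectic (almost contact metric)
manifold: `A` plays the role of the algebra of smooth functions, `V` of the
module of vector fields, `D` of the directional derivative, `g` of the metric,
`nabla` of the Levi-Civita connection, `θ` of the structure tensor and `ξ` of
the characteristic (Reeb) unit vector field, with `η X = g X ξ`. -/
structure NearlyCosymplectic where
  A : Type
  V : Type
  [ringA : CommRing A]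
  [algA : Algebra ℝ A]
  [grpV : AddCommGroup V]
  [modV : Module A V]
  /-- directional derivative of functions along a vector field -/
  D : V → A → A
  D_addl : ∀ X Y f, D (X + Y) f = D X f + D Y f
  D_smull : ∀ (f : A) (X : V) (h : A), D (f • X) h = f * D X h
  D_addr : ∀ (X : V) (f h : A), D X (f + h) = D X f + D X h
  D_mul : ∀ (X : V) (f h : A), D X (f * h) = D X f * h + f * D X h
  /-- Lie bracket of vector fields -/
  bracket : V → V → V
  bracket_D : ∀ X Y f, D (bracket X Y) f = D X (D Y f) - D Y (D X f)
  /-- the Riemannian metric -/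
  g : V → V → A
  g_symm : ∀ X Y, g X Y = g Y X
  g_addl : ∀ X Y Z, g (X + Y) Z = g X Z + g Y Z
  g_smull : ∀ (f : A) X Y, g (f • X) Y = f * g X Y
  /-- the Levi-Civita connection -/
  nabla : V → V → V
  nabla_addl : ∀ X Y Z, nabla (X + Y) Z = nabla X Z + nabla Y Z
  nabla_smull : ∀ (f : A) X Y, nabla (f • X) Y = f • nabla X Y
  nabla_addr : ∀ X Y Z, nabla X (Y + Z) = nabla X Y + nabla X Z
  nabla_leibniz : ∀ (X : V) (f : A) (Y : V),
    nabla X (f • Y) = D X f • Y + f • nabla X Y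
  metric_compat : ∀ X Y Z, D X (g Y Z) = g (nabla X Y) Z + g Y (nabla X Z)
  torsion_free : ∀ X Y, nabla X Y - nabla Y X = bracket X Y
  /-- the structure (1,1)-tensor θ -/
  θ : V → V
  θ_add : ∀ X Y, θ (X + Y) = θ X + θ Y
  θ_smul : ∀ (f : A) X, θ (f • X) = f • θ X
  /-- the characteristic vector field ξ -/
  ξ : V
  /-- ξ is a unit vector field (and η(ξ)=1, with η X = g X ξ) -/
  ξ_unit : g ξ ξ = 1
  /-- θ² = -Id + η ⊗ ξ -/
  θ_sq : ∀ X, θ (θ X) = -X + g X ξ • ξ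
  /-- metric compatibility of the almost contact structure -/
  θ_compat : ∀ X Y, g (θ X) (θ Y) = g X Y - g X ξ * g Y ξ
  /-- the nearly cosymplectic condition (∇_X θ)(Y) + (∇_Y θ)(X) = 0 -/
  nearly : ∀ X Y,
    (nabla X (θ Y) - θ (nabla X Y)) + (nabla Y (θ X) - θ (nabla Y X)) = 0

attribute [instance] NearlyCosymplectic.ringA NearlyCosymplectic.algA
  NearlyCosymplectic.grpV NearlyCosymplectic.modV

namespace NearlyCosymplectic

variable (M : NearlyCosymplectic)

/-- the covariant derivative (∇_X θ)(Y) -/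
def nablaθ (X Y : M.V) : M.V := M.nabla X (M.θ Y) - M.θ (M.nabla X Y)

/-- the Riemann curvature operator R(X,Y)Z = [∇_X,∇_Y]Z - ∇_{[X,Y]}Z -/
def R (X Y Z : M.V) : M.V :=
  M.nabla X (M.nabla Y Z) - M.nabla Y (M.nabla X Z) - M.nabla (M.bracket X Y) Z

/-- the second covariant derivative (∇²_{X,Y} θ)(Z) -/
def nabla2θ (X Y Z : M.V) : M.V :=
  M.nabla X (M.nablaθ Y Z) - M.nablaθ (M.nabla X Y) Z - M.nablaθ Y (M.nabla X Z)

end NearlyCosymplectic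


/-! Differentiating `θ² = -Id + η ⊗ ξ` expresses `(∇_X θ)(θ Y)` through `θ ((∇_X θ) Y)`, and the
nearly cosymplectic symmetry turns this into a formula for `(∇_{θX} θ) Y`. Applying both at
`(θ X, Y)` gives the identity up to a multiple of `ξ`, namely `g((∇_X θ) Y, ξ) + c g(X, ∇_Y ξ) +
g(Y, ∇_{θX} ξ)` with `c = g(θξ, ξ)`. Pairing the nearly cosymplectic condition with `ξ` shows `∇_ξ ξ = 0`, that `c` is
constant, that `∇_{θX} ξ = -θ ∇_X ξ`, and finally that `∇ ξ` is skew (`ξ` is Killing); together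
these make the coefficient vanish. -/

theorem eq_zero_of_add_self_eq_zero {R N : Type*} [Semiring R] [Algebra ℝ R] [AddCommMonoid N]
    [Module R N] {v : N} (h : v + v = 0) : v = 0 := by
  have h2 : IsUnit (2 : R) := by
    simpa only [map_ofNat] using (isUnit_of_invertible (2 : ℝ)).map (algebraMap ℝ R)
  rwa [← two_smul R v, h2.smul_eq_zero] at h

namespace NearlyCosymplectic

variable (M : NearlyCosymplectic)

section Linearity

def θₗ : M.V →ₗ[M.A] M.V where
  toFun := M.θ
  map_add' := M.θ_add
  map_smul' := M.θ_smul

lemma θ_zero : M.θ 0 = 0 := M.θₗ.map_zero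

lemma θ_neg (X : M.V) : M.θ (-X) = -M.θ X := M.θₗ.map_neg X

lemma θ_sub (X Y : M.V) : M.θ (X - Y) = M.θ X - M.θ Y := M.θₗ.map_sub X Y

lemma g_addr (X Y Z : M.V) : M.g X (Y + Z) = M.g X Y + M.g X Z := by
  rw [M.g_symm, M.g_addl, M.g_symm Y, M.g_symm Z]

lemma g_smulr (f : M.A) (X Y : M.V) : M.g X (f • Y) = f * M.g X Y := by
  rw [M.g_symm, M.g_smull, M.g_symm Y]

def gₗ : M.V →ₗ[M.A] M.V →ₗ[M.A] M.A :=
  LinearMap.mk₂ M.A M.g M.g_addl M.g_smull M.g_addr M.g_smulr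

lemma g_negl (X Y : M.V) : M.g (-X) Y = -M.g X Y := LinearMap.map_neg₂ M.gₗ X Y

lemma g_subl (X Y Z : M.V) : M.g (X - Y) Z = M.g X Z - M.g Y Z := LinearMap.map_sub₂ M.gₗ X Y Z

lemma g_negr (X Y : M.V) : M.g X (-Y) = -M.g X Y := (M.gₗ X).map_neg Y

lemma g_zeror (X : M.V) : M.g X 0 = 0 := (M.gₗ X).map_zero

lemma nabla_negl (X Y : M.V) : M.nabla (-X) Y = -M.nabla X Y :=
  (AddMonoidHom.mk' (M.nabla · Y) (M.nabla_addl · · Y)).map_neg X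

lemma nabla_negr (X Y : M.V) : M.nabla X (-Y) = -M.nabla X Y :=
  (AddMonoidHom.mk' (M.nabla X) (M.nabla_addr X)).map_neg Y

lemma D_one (X : M.V) : M.D X 1 = 0 := by
  simpa using M.D_mul X 1 1

end Linearity

section AlmostContact

/-- Since `g` is not assumed nondegenerate, `θ ξ = 0` is not available: only `θ ξ = c • ξ` with
`c * c = 0`, where `c` is this coefficient. -/
def θξCoeff : M.A := M.g (M.θ M.ξ) M.ξ

lemma θ_θ_ξ : M.θ (M.θ M.ξ) = 0 := by
  rw [M.θ_sq, M.ξ_unit, one_smul, neg_add_cancel]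

lemma θ_ξ : M.θ M.ξ = M.θξCoeff • M.ξ := by
  have h := M.θ_sq (M.θ M.ξ)
  rw [M.θ_θ_ξ, M.θ_zero] at h
  exact neg_add_eq_zero.mp h.symm

lemma θξCoeff_mul_self : M.θξCoeff * M.θξCoeff = 0 := by
  have h := M.θ_compat M.ξ M.ξ
  rw [M.ξ_unit, M.θ_ξ, M.g_smull, M.g_smulr, M.ξ_unit] at h
  linear_combination h

lemma g_θ_ξ (X : M.V) : M.g (M.θ X) M.ξ = M.θξCoeff * M.g X M.ξ := by
  have h := congrArg (M.g · M.ξ) (congrArg M.θ (M.θ_sq X))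
  simp only [M.θ_sq (M.θ X), M.θ_add, M.θ_neg, M.θ_smul, M.θ_ξ, M.g_addl, M.g_smull,
    M.ξ_unit] at h
  linear_combination h

lemma g_θ_left (X Y : M.V) :
    M.g (M.θ X) Y = -M.g X (M.θ Y) + 2 * M.θξCoeff * M.g X M.ξ * M.g Y M.ξ := by
  have h := M.θ_compat X (M.θ Y)
  rw [M.θ_sq Y, M.g_addr, M.g_negr, M.g_smulr] at h
  linear_combination -h + M.g X M.ξ * M.g_θ_ξ Y + M.g Y M.ξ * M.g_θ_ξ X

lemma g_nabla_ξ_ξ (X : M.V) : M.g (M.nabla X M.ξ) M.ξ = 0 := by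
  have h := M.metric_compat X M.ξ M.ξ
  rw [M.ξ_unit, M.D_one, M.g_symm M.ξ] at h
  exact eq_zero_of_add_self_eq_zero (R := M.A) h.symm

end AlmostContact

section NablaTheta

lemma nablaθ_swap (X Y : M.V) : M.nablaθ X Y = -M.nablaθ Y X :=
  eq_neg_of_add_eq_zero_left (M.nearly X Y)

lemma nablaθ_self (X : M.V) : M.nablaθ X X = 0 :=
  eq_zero_of_add_self_eq_zero (R := M.A) (M.nearly X X)

lemma nablaθ_smul_left (f : M.A) (X Y : M.V) : M.nablaθ (f • X) Y = f • M.nablaθ X Y := by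
  simp only [nablaθ, M.nabla_smull, M.θ_smul, smul_sub]

lemma nablaθ_θ_right (X Y : M.V) : M.nablaθ X (M.θ Y) =
    -M.θ (M.nablaθ X Y) + M.g Y (M.nabla X M.ξ) • M.ξ + M.g Y M.ξ • M.nabla X M.ξ := by
  rw [nablaθ, nablaθ, M.θ_sq Y, M.nabla_addr, M.nabla_negr, M.nabla_leibniz,
    M.metric_compat, M.θ_sub, M.θ_sq]
  module

lemma nablaθ_θ_left (X Y : M.V) : M.nablaθ (M.θ X) Y =
    -M.θ (M.nablaθ X Y) - M.g X (M.nabla Y M.ξ) • M.ξ - M.g X M.ξ • M.nabla Y M.ξ := by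
  rw [M.nablaθ_swap, M.nablaθ_θ_right, M.nablaθ_swap Y, M.θ_neg]
  module

lemma g_nablaθ_ξ' (X Y : M.V) : M.g (M.nablaθ X Y) M.ξ =
    M.D X M.θξCoeff * M.g Y M.ξ + M.θξCoeff * M.g Y (M.nabla X M.ξ)
      - M.g (M.θ Y) (M.nabla X M.ξ) := by
  have hθY := M.metric_compat X (M.θ Y) M.ξ
  rw [M.g_θ_ξ, M.D_mul] at hθY
  have hY := M.metric_compat X Y M.ξ
  rw [nablaθ, M.g_subl, M.g_θ_ξ]
  linear_combination -hθY + M.θξCoeff * hY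

end NablaTheta

section NablaXi

lemma nabla_ξ_ξ : M.nabla M.ξ M.ξ = 0 := by
  have h := M.nablaθ_θ_left M.ξ M.ξ
  rw [M.θ_ξ, M.nablaθ_smul_left, M.nablaθ_self, smul_zero, M.θ_zero, M.g_symm M.ξ,
    M.g_nabla_ξ_ξ, M.ξ_unit] at h
  simpa using h.symm

lemma D_θξCoeff (X : M.V) : M.D X M.θξCoeff = 0 := by
  have hD (Z : M.V) : M.D Z M.θξCoeff = -(M.D M.ξ M.θξCoeff * M.g Z M.ξ) := by
    have h := congrArg (M.g · M.ξ) (M.nablaθ_swap Z M.ξ)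
    simp only [M.g_negl, M.g_nablaθ_ξ', M.ξ_unit, M.θ_ξ, M.g_smull, M.g_symm M.ξ,
      M.g_nabla_ξ_ξ, M.nabla_ξ_ξ, M.g_zeror] at h
    linear_combination h
  have hξ : M.D M.ξ M.θξCoeff = 0 :=
    eq_zero_of_add_self_eq_zero (R := M.A)
      (by linear_combination hD M.ξ - M.D M.ξ M.θξCoeff * M.ξ_unit)
  rw [hD, hξ, zero_mul, neg_zero]

lemma nablaθ_ξ (X : M.V) :
    M.nablaθ X M.ξ = M.θξCoeff • M.nabla X M.ξ - M.θ (M.nabla X M.ξ) := by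
  rw [nablaθ, M.θ_ξ, M.nabla_leibniz, M.D_θξCoeff, zero_smul, zero_add]

lemma θ_θ_nabla_ξ (X : M.V) : M.θ (M.θ (M.nabla X M.ξ)) = -M.nabla X M.ξ := by
  rw [M.θ_sq, M.g_nabla_ξ_ξ, zero_smul, add_zero]

lemma nabla_θ_ξ (X : M.V) : M.nabla (M.θ X) M.ξ = -M.θ (M.nabla X M.ξ) := by
  have h := M.nablaθ_θ_left X M.ξ
  rw [M.nabla_ξ_ξ, M.g_zeror, zero_smul, smul_zero, sub_zero, sub_zero, M.nablaθ_ξ,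
    M.nablaθ_ξ, M.θ_sub, M.θ_smul, M.θ_θ_nabla_ξ] at h
  have hθ : M.θ (M.nabla (M.θ X) M.ξ) = M.θξCoeff • M.nabla (M.θ X) M.ξ
      + M.θξCoeff • M.θ (M.nabla X M.ξ) + M.nabla X M.ξ := by
    linear_combination (norm := module) -h
  -- apply `θ` once more: the `c`-terms cancel because `c * c = 0`
  have hθθ := congrArg M.θ hθ
  rw [M.θ_θ_nabla_ξ, M.θ_add, M.θ_add, M.θ_smul, M.θ_smul, M.θ_θ_nabla_ξ] at hθθ
  linear_combination (norm := module) -hθθ - M.θξCoeff • hθ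
    - M.θξCoeff_mul_self • (M.nabla (M.θ X) M.ξ + M.θ (M.nabla X M.ξ))

lemma g_θ_nabla_ξ (X Y : M.V) :
    M.g (M.θ Y) (M.nabla X M.ξ) = M.g Y (M.nabla (M.θ X) M.ξ) := by
  rw [M.g_θ_left, M.g_nabla_ξ_ξ, M.nabla_θ_ξ, M.g_negr]
  ring

lemma g_nablaθ_ξ (X Y : M.V) : M.g (M.nablaθ X Y) M.ξ =
    M.θξCoeff * M.g Y (M.nabla X M.ξ) - M.g Y (M.nabla (M.θ X) M.ξ) := by
  rw [M.g_nablaθ_ξ', M.D_θξCoeff, M.g_θ_nabla_ξ]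
  ring

lemma g_nabla_ξ_antisymm (X Y : M.V) :
    M.g Y (M.nabla X M.ξ) = -M.g X (M.nabla Y M.ξ) := by
  -- `σ ∘ θ = c σ` and `σ ∘ θ² = -σ` force `σ = -c² σ = 0`
  set σ : M.V → M.A := fun Z => M.g Y (M.nabla Z M.ξ) + M.g Z (M.nabla Y M.ξ) with hσ
  have hσθ (X : M.V) : σ (M.θ X) = M.θξCoeff * σ X := by
    have h := congrArg (M.g · M.ξ) (M.nablaθ_swap X Y)
    simp only [M.g_negl, M.g_nablaθ_ξ] at h
    simp only [hσ, M.g_θ_nabla_ξ Y X]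
    linear_combination -h
  have hσθθ : σ (M.θ (M.θ X)) = -σ X := by
    simp only [hσ]
    rw [M.θ_sq, M.nabla_addl, M.nabla_negl, M.nabla_smull, M.nabla_ξ_ξ, smul_zero,
      add_zero, M.g_addl, M.g_negl, M.g_smull, M.g_negr, M.g_symm M.ξ, M.g_nabla_ξ_ξ]
    ring
  have hσX : σ X = 0 := by
    linear_combination hσθθ - hσθ (M.θ X) - M.θξCoeff * hσθ X - σ X * M.θξCoeff_mul_self
  linear_combination hσX

end NablaXi

end NearlyCosymplectic

open NearlyCosymplectic

/-- (∇_{θX} θ)(θY) = -(∇_X θ)(Y) + g(Y,ξ) ∇_{θX} ξ + g(X,ξ) θ(∇_Y ξ). -/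
theorem stmt1 (M : NearlyCosymplectic) (X Y : M.V) :
    M.nablaθ (M.θ X) (M.θ Y) =
      -(M.nablaθ X Y) + M.g Y M.ξ • M.nabla (M.θ X) M.ξ
        + M.g X M.ξ • M.θ (M.nabla Y M.ξ) := by
  have h := M.nablaθ_θ_right (M.θ X) Y
  rw [M.nablaθ_θ_left X Y, M.θ_sub, M.θ_sub, M.θ_neg, M.θ_sq (M.nablaθ X Y), M.θ_smul,
    M.θ_smul, M.θ_ξ] at h
  linear_combination (norm := module) h + M.g_nablaθ_ξ X Y • M.ξ
    + (M.θξCoeff * M.g_nabla_ξ_antisymm X Y) • M.ξ
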